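/- In consequence, for 0 ≤ p, q < h_k, the inner product ⟨ z^p / Π_{j=1}^k Θ_j(z), z^q / Π_{j=1}^k Θ_j(z) ⟩ in L²(S^1, dκ), where κ is the weak limit of the Riesz-product measures, equals Π_{j=1}^k m_j^{−1} if p = q and 0 otherwise; equivalently, the functions (Π_{j=1}^k m_j)^{1/2} · z^p / Π_{j=1}^k Θ_j(z), 0 ≤ p < h_k, form an orthonormal system in L²(S^1, dκ). -/

import Mathlib

/-!
On the unit circle `z̄ = z⁻¹`, so against the Riesz density `∏_{j ≤ N} T_j` (`N ≥ k`) the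
integrand becomes `(∏_{j ≤ k} m_j⁻¹) z^{p-q} ∏_{k < j ≤ N} T_j`. Expanding
`T_j = m_j⁻¹ ∑_{r,s} z^{e_r - e_s}` over the exponents `e_r` of `Θ_j`, the positivity of the
`a_j^i` separates these exponents by more than `h_{j-1}`, so every nonzero frequency of
`∏_{k < j ≤ N} T_j` has size at least `h_k`, and integrating against `z^{p-q}`, `|p - q| < h_k`,
gives `δ_{pq}`. Testing the weak convergence against `min (dist z S¹) 1` shows that `κ` lives on
`S¹`; there the integrand is continuous, so by Tietze extension it may be tested against the weak
convergence as well.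
-/

open MeasureTheory Finset Filter Topology

/-- `h_k`: `h_0 = 1`, `h_k = m_k h_{k-1} + ∑_{i=0}^{m_k-2} a_k^i`. -/
def hgt (m : ℕ → ℕ) (a : ℕ → ℕ → ℕ) : ℕ → ℕ
  | 0 => 1
  | k + 1 => m (k + 1) * hgt m a k + ∑ i ∈ Finset.range (m (k + 1) - 1), a (k + 1) i

/-- The normalized Lebesgue measure `dż` on the unit circle `S¹ ⊆ ℂ`. -/
noncomputable def circleMeasure : Measure ℂ :=
  Measure.map (fun t : ℝ => Complex.exp (2 * Real.pi * Complex.I * t))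
    (volume.restrict (Set.Ico (0 : ℝ) 1))

/-- `Θ_j(z) = ∑_{p=0}^{m_j-1} z^{p h_{j-1} + ∑_{i<p} a_j^i}`. -/
noncomputable def ThetaC (m : ℕ → ℕ) (a : ℕ → ℕ → ℕ) (j : ℕ) (z : ℂ) : ℂ :=
  ∑ p ∈ Finset.range (m j), z ^ (p * hgt m a (j - 1) + ∑ i ∈ Finset.range p, a j i)

/-- `T_j(z) = (1/m_j) Θ_j(z) conj(Θ_j(z))`. -/
noncomputable def TTj (m : ℕ → ℕ) (a : ℕ → ℕ → ℕ) (j : ℕ) (z : ℂ) : ℂ :=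
  (m j : ℂ)⁻¹ * ThetaC m a j z * (starRingEnd ℂ) (ThetaC m a j z)

/-- The `n`-th Fourier coefficient `∫_{S¹} z^{-n} f(z) dż` of a function on the
circle. -/
noncomputable def fCoeff (f : ℂ → ℂ) (n : ℤ) : ℂ :=
  ∫ z, z ^ (-n) * f z ∂circleMeasure

section WeakLimit

variable {ι X : Type*}

theorem integrable_of_ae_mem_of_continuousOn {E : Type*} [TopologicalSpace X] [T2Space X]
    [MeasurableSpace X] [OpensMeasurableSpace X] [NormedAddCommGroup E] {μ : Measure X}
    [IsFiniteMeasureOnCompacts μ] {K : Set X} {f : X → E} (hK : IsCompact K)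
    (hμK : ∀ᵐ x ∂μ, x ∈ K) (hf : ContinuousOn f K) : Integrable f μ := by
  rw [← Measure.restrict_eq_self_of_ae_mem hμK]
  exact hf.integrableOn_compact hK

theorem exists_boundedContinuousFunction_eqOn [TopologicalSpace X] [NormalSpace X] [T2Space X]
    {K : Set X} (hK : IsCompact K) {φ : X → ℝ} (hφ : ContinuousOn φ K) :
    ∃ Φ : BoundedContinuousFunction X ℝ, Set.EqOn Φ φ K := by
  have : CompactSpace K := isCompact_iff_compactSpace.mp hK
  obtain ⟨Φ, -, hΦ⟩ := BoundedContinuousFunction.exists_extension_norm_eq_of_isClosedEmbedding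
    (BoundedContinuousFunction.mkOfCompact ⟨K.domRestrict φ, hφ.domRestrict⟩)
    hK.isClosed.isClosedEmbedding_subtypeVal
  exact ⟨Φ, fun x hx => congrFun hΦ ⟨x, hx⟩⟩

variable [MeasurableSpace X] {l : Filter ι} {μ : ι → Measure X} {κ : Measure X} {K : Set X}

theorem ae_mem_of_forall_tendsto_integral [MetricSpace X] [OpensMeasurableSpace X] [l.NeBot]
    [IsFiniteMeasure κ] (hK : IsClosed K) (hK₀ : K.Nonempty) (hμK : ∀ i, ∀ᵐ x ∂μ i, x ∈ K)
    (hκ : ∀ f : BoundedContinuousFunction X ℝ,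
      Tendsto (fun i => ∫ x, f x ∂μ i) l (𝓝 (∫ x, f x ∂κ))) :
    ∀ᵐ x ∂κ, x ∈ K := by
  set d : X → ℝ := fun x => min (Metric.infDist x K) 1
  have hd₀ : ∀ x, 0 ≤ d x := fun x => le_min Metric.infDist_nonneg zero_le_one
  let f : BoundedContinuousFunction X ℝ := .ofNormedAddCommGroup d
    ((Metric.continuous_infDist_pt K).min continuous_const) 1
    fun x => by rw [Real.norm_of_nonneg (hd₀ x)]; exact min_le_right _ _
  have hμf : ∀ i, ∫ x, f x ∂μ i = 0 := fun i =>
    integral_eq_zero_of_ae <| (hμK i).mono fun x hx => by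
      simp [f, d, Metric.infDist_zero_of_mem hx]
  have hκf : ∫ x, f x ∂κ = 0 :=
    tendsto_nhds_unique (hκ f) (by simpa only [hμf] using tendsto_const_nhds)
  have hf_ae : f =ᵐ[κ] 0 := (integral_eq_zero_iff_of_nonneg hd₀ (f.integrable κ)).mp hκf
  filter_upwards [hf_ae] with x hx
  have hx' : min (Metric.infDist x K) 1 = 0 := hx
  rw [hK.mem_iff_infDist_zero hK₀]
  exact le_antisymm ((min_le_iff.mp hx'.le).resolve_right (by norm_num)) Metric.infDist_nonneg

theorem tendsto_integral_of_continuousOn_real [TopologicalSpace X] [NormalSpace X] [T2Space X]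
    (hK : IsCompact K) (hμK : ∀ i, ∀ᵐ x ∂μ i, x ∈ K)
    (hκK : ∀ᵐ x ∂κ, x ∈ K)
    (hκ : ∀ f : BoundedContinuousFunction X ℝ,
      Tendsto (fun i => ∫ x, f x ∂μ i) l (𝓝 (∫ x, f x ∂κ)))
    {φ : X → ℝ} (hφ : ContinuousOn φ K) :
    Tendsto (fun i => ∫ x, φ x ∂μ i) l (𝓝 (∫ x, φ x ∂κ)) := by
  obtain ⟨Φ, hΦ⟩ := exists_boundedContinuousFunction_eqOn hK hφ
  have hΦφ : ∀ ν : Measure X, (∀ᵐ x ∂ν, x ∈ K) → ∫ x, Φ x ∂ν = ∫ x, φ x ∂ν := fun ν hν =>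
    integral_congr_ae (hν.mono fun x hx => hΦ hx)
  simpa only [hΦφ _ (hμK _), hΦφ κ hκK] using hκ Φ

theorem tendsto_integral_of_continuousOn {𝕜 : Type*} [RCLike 𝕜] [TopologicalSpace X]
    [NormalSpace X] [T2Space X] [OpensMeasurableSpace X] [∀ i, IsFiniteMeasure (μ i)]
    [IsFiniteMeasure κ] (hK : IsCompact K) (hμK : ∀ i, ∀ᵐ x ∂μ i, x ∈ K)
    (hκK : ∀ᵐ x ∂κ, x ∈ K)
    (hκ : ∀ f : BoundedContinuousFunction X ℝ,
      Tendsto (fun i => ∫ x, f x ∂μ i) l (𝓝 (∫ x, f x ∂κ)))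
    {g : X → 𝕜} (hg : ContinuousOn g K) :
    Tendsto (fun i => ∫ x, g x ∂μ i) l (𝓝 (∫ x, g x ∂κ)) := by
  have hre_add_im : ∀ ν : Measure X, [IsFiniteMeasure ν] → (∀ᵐ x ∂ν, x ∈ K) →
      ∫ x, g x ∂ν =
        ((∫ x, RCLike.re (g x) ∂ν : ℝ) : 𝕜) + (∫ x, RCLike.im (g x) ∂ν : ℝ) * RCLike.I :=
    fun ν _ hν => (integral_re_add_im (integrable_of_ae_mem_of_continuousOn hK hν hg)).symm
  simp only [hre_add_im _ (hμK _), hre_add_im κ hκK]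
  have hlim : ∀ φ : X → ℝ, ContinuousOn φ K →
      Tendsto (fun i => ((∫ x, φ x ∂μ i : ℝ) : 𝕜)) l (𝓝 ((∫ x, φ x ∂κ : ℝ) : 𝕜)) := fun φ hφ =>
    tendsto_ofReal_iff'.mpr (tendsto_integral_of_continuousOn_real hK hμK hκK hκ hφ)
  exact (hlim _ (RCLike.continuous_re.comp_continuousOn hg)).add
    ((hlim _ (RCLike.continuous_im.comp_continuousOn hg)).mul_const _)

end WeakLimit

section CircleMeasure

instance : IsFiniteMeasure circleMeasure := by
  unfold circleMeasure; infer_instance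

theorem ae_mem_sphere_circleMeasure : ∀ᵐ z ∂circleMeasure, z ∈ Metric.sphere (0 : ℂ) 1 := by
  unfold circleMeasure
  refine (ae_map_iff (by fun_prop) Metric.isClosed_sphere.measurableSet).mpr
    (ae_of_all _ fun t => ?_)
  simp [Complex.norm_exp]

theorem integral_zpow_circleMeasure (n : ℤ) :
    ∫ z, z ^ n ∂circleMeasure = if n = 0 then 1 else 0 := by
  rw [circleMeasure, integral_map (by fun_prop) (by fun_prop)]
  simp_rw [← Complex.exp_int_mul]
  rw [integral_Ico_eq_integral_Ioo, ← integral_Ioc_eq_integral_Ioo,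
    ← intervalIntegral.integral_of_le zero_le_one]
  split_ifs with hn
  · simp [hn]
  · have hc : (n * 2 * Real.pi * Complex.I : ℂ) ≠ 0 := by
      simp [hn, Real.pi_ne_zero, Complex.I_ne_zero]
    simp_rw [← mul_assoc]
    rw [integral_exp_mul_complex hc, Complex.ofReal_one, mul_one, mul_assoc, mul_assoc,
      ← mul_assoc 2, Complex.exp_int_mul_two_pi_mul_I]
    simp

end CircleMeasure

section Exponents

variable (m : ℕ → ℕ) (a : ℕ → ℕ → ℕ)

def thetaExp (j r : ℕ) : ℕ := r * hgt m a (j - 1) + ∑ i ∈ range r, a j i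

variable {m a}

theorem hgt_le_hgt_succ {k : ℕ} (hm : 1 ≤ m (k + 1)) : hgt m a k ≤ hgt m a (k + 1) := by
  have : hgt m a k ≤ m (k + 1) * hgt m a k := Nat.le_mul_of_pos_left _ hm
  simp only [hgt]; omega

theorem hgt_mono (hm : ∀ j, 1 ≤ j → 1 ≤ m j) : Monotone (hgt m a) :=
  monotone_nat_of_le_succ fun k => hgt_le_hgt_succ (hm (k + 1) k.succ_pos)

theorem thetaExp_add_hgt_le {j r : ℕ} (hr : r < m (j + 1)) :
    thetaExp m a (j + 1) r + hgt m a j ≤ hgt m a (j + 1) := by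
  have hmul : (r + 1) * hgt m a j ≤ m (j + 1) * hgt m a j := Nat.mul_le_mul_right _ hr
  have hsum : ∑ i ∈ range r, a (j + 1) i ≤ ∑ i ∈ range (m (j + 1) - 1), a (j + 1) i :=
    sum_le_sum_of_subset (range_subset_range.mpr (by omega))
  simp only [thetaExp, hgt, Nat.add_sub_cancel]
  rw [add_one_mul] at hmul
  omega

theorem thetaExp_add_hgt_lt {j r s : ℕ} (ha : 1 ≤ a (j + 1) r) (hrs : r < s) :
    thetaExp m a (j + 1) r + hgt m a j < thetaExp m a (j + 1) s := by
  have hmul : (r + 1) * hgt m a j ≤ s * hgt m a j := Nat.mul_le_mul_right _ hrs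
  have hsum : ∑ i ∈ range (r + 1), a (j + 1) i ≤ ∑ i ∈ range s, a (j + 1) i :=
    sum_le_sum_of_subset (range_subset_range.mpr hrs)
  simp only [thetaExp, Nat.add_sub_cancel]
  rw [add_one_mul] at hmul
  rw [sum_range_succ] at hsum
  omega

/-- Off the diagonal, multiplying by `T_{N+1}` shifts a frequency by
`thetaExp r - thetaExp s`, whose size lies in `(h_N, h_{N+1} - h_N]`. -/
theorem hgt_sub_hgt_lt_natAbs_add_thetaExp_sub {k N r s : ℕ} {n : ℤ}
    (ha : ∀ i, 1 ≤ a (N + 1) i) (hkN : hgt m a k ≤ hgt m a N) (hr : r < m (N + 1))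
    (hs : s < m (N + 1)) (hrs : r ≠ s)
    (hn : n.natAbs < hgt m a k ∨ hgt m a (N + 1) - hgt m a k < n.natAbs) :
    hgt m a N - hgt m a k <
      (n + thetaExp m a (N + 1) r - thetaExp m a (N + 1) s).natAbs := by
  have hr' := thetaExp_add_hgt_le (a := a) hr
  have hs' := thetaExp_add_hgt_le (a := a) hs
  rcases hrs.lt_or_gt with h | h
  · have := thetaExp_add_hgt_lt (m := m) (ha r) h
    omega
  · have := thetaExp_add_hgt_lt (m := m) (ha s) h
    omega

end Exponents

section RieszProduct

variable {m : ℕ → ℕ} {a : ℕ → ℕ → ℕ}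

theorem continuous_ThetaC (j : ℕ) : Continuous (ThetaC m a j) := by
  unfold ThetaC; fun_prop

theorem continuous_TTj (j : ℕ) : Continuous (TTj m a j) := by
  unfold TTj; have := continuous_ThetaC (m := m) (a := a) j; fun_prop

theorem continuous_prod_TTj (s : Finset ℕ) : Continuous fun z => ∏ j ∈ s, TTj m a j z :=
  continuous_finsetProd _ fun j _ => continuous_TTj j

theorem TTj_eq_ofReal (j : ℕ) (z : ℂ) :
    TTj m a j z = ((Complex.normSq (ThetaC m a j z) / m j : ℝ) : ℂ) := by
  rw [TTj, mul_assoc, Complex.mul_conj]; push_cast; ring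

theorem TTj_eq_sum_zpow {z : ℂ} (hz : ‖z‖ = 1) (j : ℕ) :
    TTj m a j z = (m j : ℂ)⁻¹ * ∑ r ∈ range (m j), ∑ s ∈ range (m j),
      z ^ ((thetaExp m a j r : ℤ) - thetaExp m a j s) := by
  have hz₀ : z ≠ 0 := norm_ne_zero_iff.mp (hz ▸ one_ne_zero)
  rw [TTj, mul_assoc, ThetaC, map_sum, sum_mul_sum]
  congr 1
  refine sum_congr rfl fun r _ => sum_congr rfl fun s _ => ?_
  rw [map_pow, ← Complex.inv_eq_conj hz, zpow_sub₀ hz₀, zpow_natCast, zpow_natCast, inv_pow,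
    div_eq_mul_inv]
  rfl

theorem integral_zpow_mul_mul_TTj {F : ℂ → ℂ} (hF : ContinuousOn F (Metric.sphere 0 1))
    (j : ℕ) (n : ℤ) :
    ∫ z, z ^ n * (F z * TTj m a j z) ∂circleMeasure =
      (m j : ℂ)⁻¹ * ∑ r ∈ range (m j), ∑ s ∈ range (m j),
        ∫ z, z ^ (n + thetaExp m a j r - thetaExp m a j s) * F z ∂circleMeasure := by
  have hint : ∀ n' : ℤ, Integrable (fun z => z ^ n' * F z) circleMeasure := fun n' =>
    integrable_of_ae_mem_of_continuousOn (isCompact_sphere 0 1) ae_mem_sphere_circleMeasure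
      (((continuousOn_zpow₀ n').mono fun z hz (h₀ : z = 0) => by simp [h₀] at hz).mul hF)
  calc ∫ z, z ^ n * (F z * TTj m a j z) ∂circleMeasure
      = ∫ z, (m j : ℂ)⁻¹ * ∑ r ∈ range (m j), ∑ s ∈ range (m j),
          z ^ (n + thetaExp m a j r - thetaExp m a j s) * F z ∂circleMeasure := by
        refine integral_congr_ae (ae_mem_sphere_circleMeasure.mono fun z hz => ?_)
        simp only [TTj_eq_sum_zpow (mem_sphere_zero_iff_norm.mp hz), add_sub_assoc,
          zpow_add₀ (fun h₀ : z = 0 => by simp [h₀] at hz), mul_sum]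
        exact sum_congr rfl fun r _ => sum_congr rfl fun s _ => by ring
    _ = _ := by
        rw [integral_const_mul, integral_finsetSum _ fun r _ =>
          integrable_finsetSum _ fun s _ => hint _]
        simp_rw [integral_finsetSum _ fun s _ => hint _]

theorem integral_zpow_mul_prod_TTj (hm : ∀ j, 1 ≤ j → 1 ≤ m j) (ha : ∀ j i, 1 ≤ a j i)
    {k N : ℕ} (hkN : k ≤ N) {n : ℤ}
    (hn : n.natAbs < hgt m a k ∨ hgt m a N - hgt m a k < n.natAbs) :
    ∫ z, z ^ n * ∏ j ∈ Ioc k N, TTj m a j z ∂circleMeasure = if n = 0 then 1 else 0 := by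
  induction N, hkN using Nat.le_induction generalizing n with
  | base => simpa using integral_zpow_circleMeasure n
  | succ N hkN ih =>
    have hN : hgt m a N ≤ hgt m a (N + 1) := hgt_le_hgt_succ (hm (N + 1) N.succ_pos)
    have hterm : ∀ r ∈ range (m (N + 1)), ∀ s ∈ range (m (N + 1)),
        ∫ z, z ^ (n + thetaExp m a (N + 1) r - thetaExp m a (N + 1) s) *
          ∏ j ∈ Ioc k N, TTj m a j z ∂circleMeasure =
        if r = s then (if n = 0 then 1 else 0) else 0 := by
      intro r hr s hs
      rw [mem_range] at hr hs
      by_cases hrs : r = s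
      · rw [if_pos hrs, hrs, add_sub_cancel_right]
        exact ih (by omega)
      · have hfar := hgt_sub_hgt_lt_natAbs_add_thetaExp_sub (ha (N + 1))
          (hgt_mono hm hkN) hr hs hrs hn
        rw [ih (Or.inr hfar), if_neg hrs, if_neg (by omega)]
    simp only [prod_Ioc_succ_top hkN]
    rw [integral_zpow_mul_mul_TTj (continuous_prod_TTj _).continuousOn]
    have hM : (m (N + 1) : ℂ) ≠ 0 := by
      exact_mod_cast Nat.one_le_iff_ne_zero.mp (hm (N + 1) N.succ_pos)
    rw [sum_congr rfl fun r hr =>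
        (sum_congr rfl (hterm r hr)).trans (by rw [sum_ite_eq, if_pos hr]),
      sum_const, card_range, nsmul_eq_mul, inv_mul_cancel_left₀ hM]

end RieszProduct

section RieszMeasure

variable (m : ℕ → ℕ) (a : ℕ → ℕ → ℕ)

noncomputable def rieszMeasure (N : ℕ) : Measure ℂ :=
  circleMeasure.withDensity fun z => ENNReal.ofReal ((∏ j ∈ Icc 1 N, TTj m a j z).re)

variable {m a}

theorem prod_TTj_eq_ofReal (s : Finset ℕ) (z : ℂ) :
    ∏ j ∈ s, TTj m a j z = ((∏ j ∈ s, Complex.normSq (ThetaC m a j z) / m j : ℝ) : ℂ) := by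
  simp only [TTj_eq_ofReal, Complex.ofReal_prod]

theorem integral_rieszMeasure (N : ℕ) (g : ℂ → ℂ) :
    ∫ z, g z ∂rieszMeasure m a N = ∫ z, (∏ j ∈ Icc 1 N, TTj m a j z) * g z ∂circleMeasure := by
  have hmeas : Measurable fun z => ENNReal.ofReal ((∏ j ∈ Icc 1 N, TTj m a j z).re) :=
    (Complex.continuous_re.comp (continuous_prod_TTj _)).measurable.ennreal_ofReal
  rw [rieszMeasure, integral_withDensity_eq_integral_toReal_smul hmeas
    (ae_of_all _ fun _ => ENNReal.ofReal_lt_top)]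
  congr 1 with z
  rw [prod_TTj_eq_ofReal, Complex.ofReal_re, ENNReal.toReal_ofReal
    (prod_nonneg fun j _ => div_nonneg (Complex.normSq_nonneg _) (Nat.cast_nonneg _)),
    Complex.real_smul]

instance (N : ℕ) : IsFiniteMeasure (rieszMeasure m a N) :=
  isFiniteMeasure_withDensity_ofReal
    (integrable_of_ae_mem_of_continuousOn (isCompact_sphere 0 1) ae_mem_sphere_circleMeasure
      (Complex.continuous_re.comp (continuous_prod_TTj _)).continuousOn).hasFiniteIntegral

theorem ae_mem_sphere_rieszMeasure (N : ℕ) :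
    ∀ᵐ z ∂rieszMeasure m a N, z ∈ Metric.sphere (0 : ℂ) 1 :=
  (withDensity_absolutelyContinuous _ _).ae_le ae_mem_sphere_circleMeasure

end RieszMeasure

section Orthogonality

variable {m : ℕ → ℕ} {a : ℕ → ℕ → ℕ}

theorem continuousOn_integrand (hΘ : ∀ j z, ‖z‖ = 1 → ThetaC m a j z ≠ 0) (k p q : ℕ) :
    ContinuousOn (fun z => (z ^ p / ∏ j ∈ Icc 1 k, ThetaC m a j z) *
      (starRingEnd ℂ) (z ^ q / ∏ j ∈ Icc 1 k, ThetaC m a j z)) (Metric.sphere 0 1) := by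
  have hP : ContinuousOn (fun z => ∏ j ∈ Icc 1 k, ThetaC m a j z) (Metric.sphere 0 1) :=
    (continuous_finsetProd _ fun j _ => continuous_ThetaC j).continuousOn
  have hP₀ : ∀ z ∈ Metric.sphere (0 : ℂ) 1, ∏ j ∈ Icc 1 k, ThetaC m a j z ≠ 0 := fun z hz =>
    prod_ne_zero_iff.mpr fun j _ => hΘ j z (mem_sphere_zero_iff_norm.mp hz)
  exact ((continuousOn_pow p).div hP hP₀).mul
    (Complex.continuous_conj.comp_continuousOn ((continuousOn_pow q).div hP hP₀))

theorem prod_TTj_mul_integrand {k N p q : ℕ} (hkN : k ≤ N) {z : ℂ} (hz : ‖z‖ = 1)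
    (hP : ∏ j ∈ Icc 1 k, ThetaC m a j z ≠ 0) :
    (∏ j ∈ Icc 1 N, TTj m a j z) * ((z ^ p / ∏ j ∈ Icc 1 k, ThetaC m a j z) *
      (starRingEnd ℂ) (z ^ q / ∏ j ∈ Icc 1 k, ThetaC m a j z)) =
    (∏ j ∈ Icc 1 k, (m j : ℂ)⁻¹) * (z ^ ((p : ℤ) - q) * ∏ j ∈ Ioc k N, TTj m a j z) := by
  have hsplit : ∏ j ∈ Icc 1 N, TTj m a j z =
      (∏ j ∈ Icc 1 k, TTj m a j z) * ∏ j ∈ Ioc k N, TTj m a j z := by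
    simp only [show ∀ n, Icc 1 n = Ioc 0 n from Icc_add_one_left_eq_Ioc 0]
    exact (prod_Ioc_consecutive _ k.zero_le hkN).symm
  have hhead : ∏ j ∈ Icc 1 k, TTj m a j z = (∏ j ∈ Icc 1 k, (m j : ℂ)⁻¹) *
      ((∏ j ∈ Icc 1 k, ThetaC m a j z) * (starRingEnd ℂ) (∏ j ∈ Icc 1 k, ThetaC m a j z)) := by
    simp only [TTj, prod_mul_distrib, map_prod, mul_assoc]
  have hzpow : z ^ ((p : ℤ) - q) = z ^ p * (starRingEnd ℂ) z ^ q := by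
    rw [zpow_sub₀ (norm_ne_zero_iff.mp (hz ▸ one_ne_zero)), zpow_natCast, zpow_natCast,
      ← Complex.inv_eq_conj hz, inv_pow, div_eq_mul_inv]
  have hP' : (starRingEnd ℂ) (∏ j ∈ Icc 1 k, ThetaC m a j z) ≠ 0 := (map_ne_zero _).mpr hP
  rw [hsplit, hhead, hzpow, map_div₀, map_pow]
  field_simp

theorem integral_integrand_rieszMeasure (hm : ∀ j, 1 ≤ j → 1 ≤ m j) (ha : ∀ j i, 1 ≤ a j i)
    (hΘ : ∀ j z, ‖z‖ = 1 → ThetaC m a j z ≠ 0) {k p q : ℕ} (hp : p < hgt m a k)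
    (hq : q < hgt m a k) {N : ℕ} (hkN : k ≤ N) :
    ∫ z, (z ^ p / ∏ j ∈ Icc 1 k, ThetaC m a j z) *
        (starRingEnd ℂ) (z ^ q / ∏ j ∈ Icc 1 k, ThetaC m a j z) ∂rieszMeasure m a N =
      if p = q then ∏ j ∈ Icc 1 k, (m j : ℂ)⁻¹ else 0 := by
  rw [integral_rieszMeasure, integral_congr_ae (ae_mem_sphere_circleMeasure.mono fun z hz =>
      prod_TTj_mul_integrand hkN (mem_sphere_zero_iff_norm.mp hz)
        (prod_ne_zero_iff.mpr fun j _ => hΘ j z (mem_sphere_zero_iff_norm.mp hz))),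
    integral_const_mul, integral_zpow_mul_prod_TTj hm ha hkN (Or.inl (by omega))]
  by_cases hpq : p = q <;> simp [hpq, sub_eq_zero]

end Orthogonality

/-- Assume each `Θ_j` has no zeros on the unit circle, and
let `κ` be the weak limit of the Riesz-product measures
`∏_{j=1}^N (1/m_j)|Θ_j|² dż`.  Then for `0 ≤ p, q < h_k`,
`⟨ z^p / ∏_{j=1}^k Θ_j , z^q / ∏_{j=1}^k Θ_j ⟩_{L²(S¹, dκ)}`
equals `∏_{j=1}^k m_j^{-1}` if `p = q` and `0` otherwise; i.e. the suitably
normalized functions form an orthonormal system in `L²(S¹, dκ)`. -/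
theorem inner_product_in_L2_kappa (m : ℕ → ℕ) (a : ℕ → ℕ → ℕ)
    (hm : ∀ j, 1 ≤ j → 2 ≤ m j) (ha : ∀ j i, 1 ≤ a j i)
    (hΘ : ∀ j z, ‖z‖ = 1 → ThetaC m a j z ≠ 0)
    (κ : Measure ℂ) (hκprob : IsProbabilityMeasure κ)
    (hκ : ∀ f : BoundedContinuousFunction ℂ ℝ,
      Tendsto
        (fun N => ∫ z, f z ∂(circleMeasure.withDensity
          (fun z => ENNReal.ofReal ((∏ j ∈ Finset.Icc 1 N, TTj m a j z).re))))
        atTop (𝓝 (∫ z, f z ∂κ)))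
    (k : ℕ) (p q : ℕ) (hp : p < hgt m a k) (hq : q < hgt m a k) :
    ∫ z, (z ^ p / ∏ j ∈ Finset.Icc 1 k, ThetaC m a j z) *
        (starRingEnd ℂ) (z ^ q / ∏ j ∈ Finset.Icc 1 k, ThetaC m a j z) ∂κ
      = if p = q then ∏ j ∈ Finset.Icc 1 k, (m j : ℂ)⁻¹ else 0 := by
  have hm₁ : ∀ j, 1 ≤ j → 1 ≤ m j := fun j hj => one_le_two.trans (hm j hj)
  have hκS : ∀ᵐ z ∂κ, z ∈ Metric.sphere (0 : ℂ) 1 :=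
    ae_mem_of_forall_tendsto_integral (μ := rieszMeasure m a) Metric.isClosed_sphere
      ⟨1, by simp⟩ ae_mem_sphere_rieszMeasure hκ
  have hlim := tendsto_integral_of_continuousOn (μ := rieszMeasure m a) (isCompact_sphere 0 1)
    ae_mem_sphere_rieszMeasure hκS hκ (continuousOn_integrand hΘ k p q)
  refine tendsto_nhds_unique hlim (tendsto_const_nhds.congr' ?_)
  filter_upwards [eventually_ge_atTop k] with N hN
  exact (integral_integrand_rieszMeasure hm₁ ha hΘ hp hq hN).symm
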